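/- arXiv:2602.09676 — 4 statements merged into one kernel-verified Lean document; each statement's English description precedes it below -/
import Mathlib

section
/- Let β > 0, let 0 ≤ α < γ, let ψ > 0 with ψ ≠ α, and let a, g be real numbers with g > β. Let W : [0,∞) → [0,∞) be measurable with ∫₀^∞ e^{−γy} W(y) dy = 1/(g−β) (in particular this integral is finite). Define η(u) := e^{αu}·( 1 − (a−β)·∫₀ᵘ e^{−αy} W(y) dy ) + ((a−β)/(ψ−α))·W(u) for u ≥ 0. Then u ↦ e^{−γu} η(u) is integrable on (0,∞) and ∫₀^∞ e^{−γu} η(u) du = (1/(β−g))·( (a−g)/(γ−α) − (a−β)/(ψ−α) ). -/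
open MeasureTheory

lemma exp_int_Ioi {c : ℝ} (hc : 0 < c) (y : ℝ) :
    ∫ u in Set.Ioi y, Real.exp (-c * u) = Real.exp (-c * y) / c := by
  have h : ∫ u in Set.Ioi y, Real.exp (-c * u)
      = 0 - (-Real.exp (-c * y) / c) := by
    refine integral_Ioi_of_hasDerivAt_of_tendsto'
      (f := fun u => -Real.exp (-c * u) / c) (fun x _ => ?_)
      (exp_neg_integrableOn_Ioi y hc) ?_
    · have h1 : HasDerivAt (fun u : ℝ => -c * u) (-c) x := by
        simpa using (hasDerivAt_id x).const_mul (-c)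
      have h2 := (h1.exp).neg.div_const c
      convert h2 using 1
      · rfl
      · rfl
      · field_simp
    · have h0 : Filter.Tendsto (fun u : ℝ => Real.exp (-c * u)) Filter.atTop (nhds 0) := by
        have h1 : Filter.Tendsto (fun u : ℝ => c * u) Filter.atTop Filter.atTop :=
          Filter.Tendsto.const_mul_atTop hc Filter.tendsto_id
        have h2 := Real.tendsto_exp_neg_atTop_nhds_zero.comp h1
        simp only [neg_mul]
        exact h2
      have := (h0.neg).div_const c
      simpa using this
  rw [h]; ring

/-- Key Fubini lemma: Laplace transform of the "convolution-type" integral. -/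
lemma key_fubini {c : ℝ} (hc : 0 < c) (f : ℝ → ℝ) (hf : Measurable f)
    (hfint : IntegrableOn f (Set.Ioi 0)) :
    IntegrableOn (fun u => Real.exp (-c * u) * ∫ y in (0 : ℝ)..u, Real.exp (c * y) * f y)
        (Set.Ioi 0)
      ∧ ∫ u in Set.Ioi (0 : ℝ),
            Real.exp (-c * u) * ∫ y in (0 : ℝ)..u, Real.exp (c * y) * f y
          = (1 / c) * ∫ y in Set.Ioi (0 : ℝ), f y := by
  set μ : Measure ℝ := volume.restrict (Set.Ioi 0) with hμ
  set G : ℝ → ℝ → ℝ :=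
    fun u y => if y ≤ u then Real.exp (-c * u) * (Real.exp (c * y) * f y) else 0 with hGdef
  have hGm : Measurable (Function.uncurry G) := by
    have : Measurable (fun p : ℝ × ℝ =>
        if p.2 ≤ p.1 then Real.exp (-c * p.1) * (Real.exp (c * p.2) * f p.2) else 0) := by
      refine Measurable.ite (measurableSet_le measurable_snd measurable_fst) ?_ measurable_const
      exact ((measurable_fst.const_mul (-c)).exp).mul
        (((measurable_snd.const_mul c).exp).mul (hf.comp measurable_snd))
    exact this
  -- slice integrability in u for every fixed y
  have hslice : ∀ y : ℝ, Integrable (fun u => G u y) μ := by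
    intro y
    have hb : Integrable (fun u => (Real.exp (c * y) * |f y|) * Real.exp (-c * u)) μ :=
      (exp_neg_integrableOn_Ioi 0 hc).const_mul _
    refine hb.mono' ?_ ?_
    · exact (hGm.comp (measurable_id.prodMk measurable_const)).aestronglyMeasurable
    · refine Filter.Eventually.of_forall fun u => ?_
      by_cases h : y ≤ u
      · simp only [hGdef, if_pos h, Real.norm_eq_abs, abs_mul, Real.abs_exp]
        exact le_of_eq (by ring)
      · simp only [hGdef, if_neg h, norm_zero]
        positivity
  -- the basic exponential integral over the restricted measure
  have hcore : ∀ (y r : ℝ), 0 < y →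
      (∫ u, (if y ≤ u then Real.exp (-c * u) * r else 0) ∂μ) = Real.exp (-c * y) / c * r := by
    intro y r hy
    have heq : (fun u => if y ≤ u then Real.exp (-c * u) * r else 0)
        = Set.indicator (Set.Ici y) (fun u => Real.exp (-c * u) * r) := by
      funext u; by_cases h : y ≤ u <;> simp [Set.indicator, h]
    have hsub : Set.Ici y ∩ Set.Ioi 0 = Set.Ici y :=
      Set.inter_eq_left.mpr fun x hx => lt_of_lt_of_le hy hx
    rw [heq, integral_indicator measurableSet_Ici, hμ,
      Measure.restrict_restrict measurableSet_Ici, hsub,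
      integral_Ici_eq_integral_Ioi, integral_mul_const, exp_int_Ioi hc]
  have hexpabs : ∀ y : ℝ, Real.exp (-c * y) * Real.exp (c * y) = 1 := by
    intro y; rw [← Real.exp_add]; ring_nf; exact Real.exp_zero
  -- value of the inner u-integral for y > 0
  have hval : ∀ y : ℝ, 0 < y → (∫ u, G u y ∂μ) = f y / c := by
    intro y hy
    rw [show (fun u => G u y)
        = (fun u => if y ≤ u then Real.exp (-c * u) * (Real.exp (c * y) * f y) else 0) from rfl,
      hcore y _ hy, div_mul_eq_mul_div, ← mul_assoc, hexpabs y, one_mul]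
  -- value of the norm integral for y > 0
  have hnorm : ∀ y : ℝ, 0 < y → (∫ u, ‖G u y‖ ∂μ) = |f y| / c := by
    intro y hy
    have heq : (fun u => ‖G u y‖)
        = (fun u => if y ≤ u then Real.exp (-c * u) * (Real.exp (c * y) * |f y|) else 0) := by
      funext u; by_cases h : y ≤ u
      · simp [hGdef, if_pos h, Real.norm_eq_abs, abs_mul, Real.abs_exp]
      · simp [hGdef, if_neg h]
    rw [heq, hcore y _ hy, div_mul_eq_mul_div, ← mul_assoc, hexpabs y, one_mul]
  -- integrability on the product
  have hGint : Integrable (Function.uncurry G) (μ.prod μ) := by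
    rw [integrable_prod_iff' hGm.aestronglyMeasurable]
    constructor
    · exact Filter.Eventually.of_forall fun y => hslice y
    · have hfa : Integrable (fun y => |f y| * (1 / c)) μ := hfint.abs.mul_const _
      refine hfa.congr ?_
      filter_upwards [ae_restrict_mem measurableSet_Ioi] with y hy
      simp only [Function.uncurry_apply_pair]
      rw [hnorm y hy]; ring
  -- identify the inner y-integral for u > 0
  have hinner : ∀ u : ℝ, 0 < u →
      (∫ y, G u y ∂μ)
        = Real.exp (-c * u) * ∫ y in (0 : ℝ)..u, Real.exp (c * y) * f y := by
    intro u hu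
    have heq : (fun y => G u y)
        = Set.indicator (Set.Iic u) (fun y => Real.exp (-c * u) * (Real.exp (c * y) * f y)) := by
      funext y; by_cases h : y ≤ u <;> simp [hGdef, Set.indicator, h]
    rw [heq, integral_indicator measurableSet_Iic, hμ,
      Measure.restrict_restrict measurableSet_Iic, Set.inter_comm, Set.Ioi_inter_Iic,
      intervalIntegral.integral_of_le hu.le, ← integral_const_mul]
  -- integrability statement
  have hmain_int : IntegrableOn
      (fun u => Real.exp (-c * u) * ∫ y in (0 : ℝ)..u, Real.exp (c * y) * f y)
      (Set.Ioi 0) := by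
    have h1 : Integrable (fun u => ∫ y, G u y ∂μ) μ := hGint.integral_prod_left
    refine h1.congr ?_
    filter_upwards [ae_restrict_mem measurableSet_Ioi] with u hu
    exact hinner u hu
  refine ⟨hmain_int, ?_⟩
  have hswap := integral_integral_swap (f := G) hGint
  have hLHS : ∫ u in Set.Ioi (0 : ℝ),
      Real.exp (-c * u) * ∫ y in (0 : ℝ)..u, Real.exp (c * y) * f y
        = ∫ u, (∫ y, G u y ∂μ) ∂μ := by
    refine integral_congr_ae ?_
    filter_upwards [ae_restrict_mem measurableSet_Ioi] with u hu
    exact (hinner u hu).symm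
  have hRHS : (∫ y, (∫ u, G u y ∂μ) ∂μ) = (1 / c) * ∫ y in Set.Ioi (0 : ℝ), f y := by
    have : (∫ y, (∫ u, G u y ∂μ) ∂μ) = ∫ y in Set.Ioi (0 : ℝ), f y / c := by
      refine integral_congr_ae ?_
      filter_upwards [ae_restrict_mem measurableSet_Ioi] with y hy
      exact hval y hy
    rw [this, integral_div]; ring
  rw [hLHS, hswap, hRHS]

/-- Verification step in the proof of Lemma 2.6: the candidate overshoot transform (2.9)
has Laplace transform (2.8). -/
theorem stmt_4 (α β γ ψ a g : ℝ) (hβ : 0 < β) (hα : 0 ≤ α) (hαγ : α < γ)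
    (hψ : 0 < ψ) (hψα : ψ ≠ α) (hg : β < g)
    (W : ℝ → ℝ) (hWmeas : Measurable W) (hWnn : ∀ y, 0 ≤ y → 0 ≤ W y)
    (hWint : IntegrableOn (fun y => Real.exp (-γ * y) * W y) (Set.Ioi 0))
    (hWlap : ∫ y in Set.Ioi (0 : ℝ), Real.exp (-γ * y) * W y = 1 / (g - β))
    (η : ℝ → ℝ)
    (hη : ∀ u, η u =
        Real.exp (α * u) * (1 - (a - β) * ∫ y in (0 : ℝ)..u, Real.exp (-α * y) * W y)
          + ((a - β) / (ψ - α)) * W u) :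
    IntegrableOn (fun u => Real.exp (-γ * u) * η u) (Set.Ioi 0)
      ∧ ∫ u in Set.Ioi (0 : ℝ), Real.exp (-γ * u) * η u
          = (1 / (β - g)) * ((a - g) / (γ - α) - (a - β) / (ψ - α)) := by
  set c : ℝ := γ - α with hcdef
  have hc : 0 < c := sub_pos.mpr hαγ
  have hfm : Measurable (fun y => Real.exp (-γ * y) * W y) :=
    ((measurable_id.const_mul (-γ)).exp).mul hWmeas
  obtain ⟨hkey_int, hkey_val⟩ := key_fubini hc (fun y => Real.exp (-γ * y) * W y) hfm hWint
  have hexpc : ∀ u : ℝ, Real.exp (-γ * u) * Real.exp (α * u) = Real.exp (-c * u) := by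
    intro u; rw [← Real.exp_add, hcdef]; ring_nf
  have hexpc2 : ∀ y : ℝ, Real.exp (c * y) * (Real.exp (-γ * y) * W y)
      = Real.exp (-α * y) * W y := by
    intro y; rw [← mul_assoc, ← Real.exp_add, hcdef]; ring_nf
  have hpt : ∀ u : ℝ, Real.exp (-γ * u) * η u
      = Real.exp (-c * u)
        - (a - β) * (Real.exp (-c * u)
            * ∫ y in (0 : ℝ)..u, Real.exp (c * y) * (Real.exp (-γ * y) * W y))
        + ((a - β) / (ψ - α)) * (Real.exp (-γ * u) * W u) := by
    intro u
    rw [hη u, intervalIntegral.integral_congr (g := fun y => Real.exp (-α * y) * W y)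
      (fun y _ => hexpc2 y)]
    have h2 := hexpc u
    set I := ∫ y in (0 : ℝ)..u, Real.exp (-α * y) * W y
    linear_combination (1 - (a - β) * I) * h2
  have hf2 : IntegrableOn (fun u => (a - β) * (Real.exp (-c * u)
      * ∫ y in (0 : ℝ)..u, Real.exp (c * y) * (Real.exp (-γ * y) * W y))) (Set.Ioi 0) :=
    hkey_int.const_mul _
  have hf3 : IntegrableOn
      (fun u => ((a - β) / (ψ - α)) * (Real.exp (-γ * u) * W u)) (Set.Ioi 0) :=
    hWint.const_mul _
  have hf1 : IntegrableOn (fun u => Real.exp (-c * u)) (Set.Ioi 0) :=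
    exp_neg_integrableOn_Ioi 0 hc
  have hint : IntegrableOn (fun u => Real.exp (-γ * u) * η u) (Set.Ioi 0) := by
    refine (((hf1.sub hf2).add hf3).congr ?_)
    exact Filter.Eventually.of_forall fun u => (hpt u).symm
  refine ⟨hint, ?_⟩
  have hrw : ∫ u in Set.Ioi (0 : ℝ), Real.exp (-γ * u) * η u
      = ∫ u in Set.Ioi (0 : ℝ),
          (Real.exp (-c * u)
            - (a - β) * (Real.exp (-c * u)
                * ∫ y in (0 : ℝ)..u, Real.exp (c * y) * (Real.exp (-γ * y) * W y))
            + ((a - β) / (ψ - α)) * (Real.exp (-γ * u) * W u)) :=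
    integral_congr_ae (Filter.Eventually.of_forall fun u => hpt u)
  have hf12 : IntegrableOn (fun u => Real.exp (-c * u)
      - (a - β) * (Real.exp (-c * u)
          * ∫ y in (0 : ℝ)..u, Real.exp (c * y) * (Real.exp (-γ * y) * W y)))
      (Set.Ioi 0) := hf1.sub hf2
  rw [hrw, integral_add hf12 hf3, integral_sub hf1 hf2,
    integral_const_mul, integral_const_mul, hkey_val, hWlap]
  have h1c : ∫ u in Set.Ioi (0 : ℝ), Real.exp (-c * u) = 1 / c := by
    rw [exp_int_Ioi hc 0]; simp
  rw [h1c, hcdef]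
  have h0 : γ - α ≠ 0 := sub_ne_zero.mpr (ne_of_gt hαγ)
  have h1 : ψ - α ≠ 0 := sub_ne_zero.mpr hψα
  have h2 : g - β ≠ 0 := sub_ne_zero.mpr (ne_of_gt hg)
  have h3 : β - g ≠ 0 := sub_ne_zero.mpr (ne_of_lt hg)
  field_simp
  ring
end

section
/- Let β > 0, let α ≥ 0 and γ > 0 with α ≠ γ, let μ be a finite Borel measure on [0,∞), and let a, g be real numbers such that ∫_{[0,∞)} e^{−αy} dμ(y) = β/(β−a) and ∫_{[0,∞)} e^{−γy} dμ(y) = β/(β−g). Define η(u) := ((β−a)/β)·e^{αu}·∫_{(u,∞)} e^{−αy} dμ(y) for u ≥ 0. Then u ↦ e^{−γu} η(u) is integrable on (0,∞) and ∫₀^∞ e^{−γu} η(u) du = (1/(β−g))·( (a−g)/(γ−α) ). -/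
open MeasureTheory

/-- Lemma 2.7: the overshoot transform for a subordinator. -/
theorem stmt_5 (α β γ a g : ℝ) (hβ : 0 < β) (hα : 0 ≤ α) (hγ : 0 < γ) (hαγ : α ≠ γ)
    (μ : Measure ℝ) [IsFiniteMeasure μ] (hμ : μ (Set.Iio 0) = 0)
    (ha : ∫ y in Set.Ici (0 : ℝ), Real.exp (-α * y) ∂μ = β / (β - a))
    (hg : ∫ y in Set.Ici (0 : ℝ), Real.exp (-γ * y) ∂μ = β / (β - g))
    (η : ℝ → ℝ)
    (hη : ∀ u, η u =
        ((β - a) / β) * Real.exp (α * u) * ∫ y in Set.Ioi u, Real.exp (-α * y) ∂μ) :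
    IntegrableOn (fun u => Real.exp (-γ * u) * η u) (Set.Ioi 0)
      ∧ ∫ u in Set.Ioi (0 : ℝ), Real.exp (-γ * u) * η u
          = (1 / (β - g)) * ((a - g) / (γ - α)) := by
  have hβ0 : β ≠ 0 := hβ.ne'
  set c : ℝ := α - γ with hcdef
  have hcne : c ≠ 0 := sub_ne_zero.mpr hαγ
  set ν : Measure ℝ := volume.restrict (Set.Ioi (0:ℝ)) with hνdef
  set f : ℝ → ℝ → ℝ := fun u y =>
    Real.exp (c * u) * Set.indicator (Set.Ioi u) (fun y => Real.exp (-α * y)) y with hfdef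
  have hfnonneg : ∀ u y, 0 ≤ f u y := fun u y =>
    mul_nonneg (Real.exp_nonneg _) (Set.indicator_nonneg (fun y _ => (Real.exp_pos _).le) y)
  have hmeas : Measurable (Function.uncurry f) := by
    have he : Function.uncurry f = fun p : ℝ × ℝ =>
        Set.indicator {q : ℝ × ℝ | q.1 < q.2}
          (fun q => Real.exp (c * q.1) * Real.exp (-α * q.2)) p := by
      funext p
      by_cases h : p.1 < p.2 <;>
        simp [Function.uncurry, hfdef, Set.indicator_apply, Set.mem_Ioi, h]
    rw [he]
    exact (((measurable_fst.const_mul c).exp.mul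
      ((measurable_snd.const_mul (-α)).exp))).indicator
      (measurableSet_lt measurable_fst measurable_snd)
  have hM : μ Set.univ ≠ ⊤ := (measure_lt_top μ _).ne
  set M : ℝ := (μ Set.univ).toReal with hMdef
  -- integrability in y for each u
  have hint_u : ∀ u : ℝ, Integrable (f u) μ := by
    intro u
    have h1 : Integrable (fun y : ℝ =>
        Set.indicator (Set.Ioi u) (fun y => Real.exp (-α * y)) y) μ := by
      apply Integrable.mono' (integrable_const (Real.exp (-α * u)))
      · exact ((measurable_id.const_mul (-α)).exp.indicator measurableSet_Ioi).aestronglyMeasurable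
      · filter_upwards with y
        rw [Real.norm_eq_abs, abs_of_nonneg (Set.indicator_nonneg (fun y _ => (Real.exp_pos _).le) y)]
        by_cases h : y ∈ Set.Ioi u
        · rw [Set.indicator_of_mem h]
          exact Real.exp_le_exp.mpr (by nlinarith [Set.mem_Ioi.mp h])
        · rw [Set.indicator_of_notMem h]; exact (Real.exp_pos _).le
    exact h1.const_mul _
  have hFeq : ∀ u, ∫ y, f u y ∂μ
      = Real.exp (c * u) * ∫ y in Set.Ioi u, Real.exp (-α * y) ∂μ := by
    intro u
    rw [hfdef]
    rw [integral_const_mul, integral_indicator measurableSet_Ioi]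
  -- the iterated-norm integral is integrable over ν
  have hnormint : ∀ u, ∫ y, ‖f u y‖ ∂μ = ∫ y, f u y ∂μ := by
    intro u; congr 1; funext y; exact Real.norm_of_nonneg (hfnonneg u y)
  have hIntInt : Integrable (fun u => ∫ y, ‖f u y‖ ∂μ) ν := by
    apply Integrable.mono' ((exp_neg_integrableOn_Ioi 0 hγ).mul_const M)
    · exact (hmeas.norm.aestronglyMeasurable.integral_prod_right')
    · rw [ae_restrict_iff' measurableSet_Ioi]
      filter_upwards with u hu
      have hF0 : 0 ≤ ∫ y in Set.Ioi u, Real.exp (-α * y) ∂μ :=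
        setIntegral_nonneg measurableSet_Ioi (fun y _ => (Real.exp_pos _).le)
      have hFle : ∫ y in Set.Ioi u, Real.exp (-α * y) ∂μ ≤ Real.exp (-α * u) * M := by
        have h1 : ‖∫ y in Set.Ioi u, Real.exp (-α * y) ∂μ‖
            ≤ Real.exp (-α * u) * (μ (Set.Ioi u)).toReal := by
          apply norm_setIntegral_le_of_norm_le_const (measure_lt_top μ _)
          intro y hy
          rw [Real.norm_eq_abs, abs_of_nonneg (Real.exp_pos _).le]
          exact Real.exp_le_exp.mpr (by nlinarith [Set.mem_Ioi.mp hy])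
        have h2 : (μ (Set.Ioi u)).toReal ≤ M :=
          ENNReal.toReal_mono hM (measure_mono (Set.subset_univ _))
        calc ∫ y in Set.Ioi u, Real.exp (-α * y) ∂μ ≤ Real.exp (-α * u) * (μ (Set.Ioi u)).toReal := by
              rw [← Real.norm_of_nonneg hF0]; exact h1
          _ ≤ Real.exp (-α * u) * M := by
              exact mul_le_mul_of_nonneg_left h2 (Real.exp_pos _).le
      rw [hnormint u, hFeq u, Real.norm_of_nonneg (mul_nonneg (Real.exp_pos _).le hF0)]
      calc Real.exp (c * u) * ∫ y in Set.Ioi u, Real.exp (-α * y) ∂μ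
          ≤ Real.exp (c * u) * (Real.exp (-α * u) * M) :=
            mul_le_mul_of_nonneg_left hFle (Real.exp_pos _).le
        _ = Real.exp (-γ * u) * M := by
            rw [← mul_assoc, ← Real.exp_add, hcdef]; ring_nf
  have hIntf : Integrable (Function.uncurry f) (ν.prod μ) :=
    (integrable_prod_iff hmeas.aestronglyMeasurable).mpr
      ⟨Filter.Eventually.of_forall hint_u, hIntInt⟩
  have hIone : Integrable (fun u => ∫ y, f u y ∂μ) ν := hIntf.integral_prod_left
  -- key pointwise identity
  have hkey : ∀ u, Real.exp (-γ * u) * η u = ((β - a) / β) * ∫ y, f u y ∂μ := by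
    intro u
    rw [hη u, hFeq u, hcdef, show (α - γ) * u = α * u + (-γ * u) by ring, Real.exp_add]
    ring
  have hfun : (fun u => Real.exp (-γ * u) * η u)
      = fun u => ((β - a) / β) * ∫ y, f u y ∂μ := funext hkey
  constructor
  · show Integrable _ ν
    rw [hfun]; exact hIone.const_mul _
  -- compute inner integral in u for each y
  have hinner : ∀ y : ℝ, (∫ u, f u y ∂ν)
      = Set.indicator (Set.Ici (0:ℝ))
          (fun y => (Real.exp (-γ * y) - Real.exp (-α * y)) / c) y := by
    intro y
    have hfy : (fun u => f u y)
        = Set.indicator (Set.Iio y) (fun u => Real.exp (c * u) * Real.exp (-α * y)) := by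
      funext u
      by_cases h : u < y <;>
        simp [hfdef, Set.indicator_apply, Set.mem_Ioi, Set.mem_Iio, h]
    rw [hfy, integral_indicator measurableSet_Iio, hνdef,
      Measure.restrict_restrict measurableSet_Iio, Set.inter_comm, Set.Ioi_inter_Iio]
    by_cases hy : 0 < y
    · have hIoo : ∫ u in Set.Ioo 0 y, Real.exp (c * u) * Real.exp (-α * y)
          = (Real.exp (c * y) - 1) / c * Real.exp (-α * y) := by
        rw [integral_mul_const, ← integral_Ioc_eq_integral_Ioo,
          ← intervalIntegral.integral_of_le hy.le]
        have hD : ∀ u : ℝ, HasDerivAt (fun v => Real.exp (c * v) / c) (Real.exp (c * u)) u := by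
          intro u
          have h1 : HasDerivAt (fun v : ℝ => c * v) c u := by
            simpa using (hasDerivAt_id u).const_mul c
          have h2 := (Real.hasDerivAt_exp (c * u)).comp u h1
          have h3 := h2.div_const c
          simpa [mul_div_assoc, mul_div_cancel_right₀, hcne] using h3
        rw [intervalIntegral.integral_eq_sub_of_hasDerivAt (fun u _ => hD u)
          ((Real.continuous_exp.comp (continuous_const.mul continuous_id)).intervalIntegrable 0 y)]
        rw [mul_zero, Real.exp_zero]
        ring
      rw [hIoo, Set.indicator_of_mem (Set.mem_Ici.mpr hy.le)]
      have he2 : Real.exp (c * y) * Real.exp (-α * y) = Real.exp (-γ * y) := by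
        rw [← Real.exp_add, hcdef]; ring_nf
      rw [div_mul_eq_mul_div, sub_mul, he2, one_mul]
    · rw [Set.Ioo_eq_empty hy, Measure.restrict_empty, integral_zero_measure]
      rcases eq_or_lt_of_le (le_of_not_gt hy) with h0 | hneg
      · subst h0
        simp
      · rw [Set.indicator_of_notMem (by simpa [Set.mem_Ici] using not_le.mpr hneg)]
  -- integrability of the exponentials on Ici 0
  have hbd : ∀ δ : ℝ, 0 ≤ δ → Integrable (fun y => Real.exp (-δ * y)) (μ.restrict (Set.Ici 0)) := by
    intro δ hδ
    apply Integrable.mono' (integrable_const 1)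
    · exact ((measurable_id.const_mul (-δ)).exp).aestronglyMeasurable
    · rw [ae_restrict_iff' measurableSet_Ici]
      filter_upwards with y hy
      rw [Real.norm_of_nonneg (Real.exp_pos _).le]
      exact Real.exp_le_one_iff.mpr (by nlinarith [Set.mem_Ici.mp hy])
  -- the main integral computation
  have hmain : ∫ u in Set.Ioi (0:ℝ), Real.exp (-γ * u) * η u
      = ((β - a) / β) * ((β / (β - g) - β / (β - a)) / c) := by
    calc ∫ u in Set.Ioi (0:ℝ), Real.exp (-γ * u) * η u
        = ∫ u, ((β - a) / β) * ∫ y, f u y ∂μ ∂ν := by rw [hfun]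
      _ = ((β - a) / β) * ∫ u, (∫ y, f u y ∂μ) ∂ν := integral_const_mul _ _
      _ = ((β - a) / β) * ∫ y, (∫ u, f u y ∂ν) ∂μ := by
          rw [integral_integral_swap hIntf]
      _ = ((β - a) / β) * ∫ y in Set.Ici (0:ℝ),
            (Real.exp (-γ * y) - Real.exp (-α * y)) / c ∂μ := by
          rw [funext hinner, integral_indicator measurableSet_Ici]
      _ = ((β - a) / β) * ((β / (β - g) - β / (β - a)) / c) := by
          rw [integral_div, integral_sub (hbd γ hγ.le) (hbd α hα), ha, hg]
  rw [hmain]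
  -- algebra, with case analysis on whether β - a = 0
  have hzero : β - a = 0 → β - g = 0 := by
    intro h0
    have hza : ∫ y in Set.Ici (0:ℝ), Real.exp (-α * y) ∂μ = 0 := by
      rw [ha, h0, div_zero]
    have hμ0 : μ.restrict (Set.Ici (0:ℝ)) = 0 := by
      have hae := (integral_eq_zero_iff_of_nonneg
        (fun y => (Real.exp_pos (-α * y)).le) (hbd α hα)).mp hza
      apply Measure.measure_univ_eq_zero.mp
      simpa [ae_iff, Real.exp_ne_zero] using ae_iff.mp hae
    have : (0:ℝ) = β / (β - g) := by
      rw [← hg, hμ0, integral_zero_measure]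
    rcases div_eq_zero_iff.mp this.symm with h | h
    · exact absurd h hβ0
    · exact h
  by_cases hba : β - a = 0
  · have hbg := hzero hba
    rw [hba, hbg]
    simp
  · have hbg : β - g ≠ 0 := by
      intro h0
      have hzg : ∫ y in Set.Ici (0:ℝ), Real.exp (-γ * y) ∂μ = 0 := by
        rw [hg, h0, div_zero]
      have hμ0 : μ.restrict (Set.Ici (0:ℝ)) = 0 := by
        have hae := (integral_eq_zero_iff_of_nonneg
          (fun y => (Real.exp_pos (-γ * y)).le) (hbd γ hγ.le)).mp hzg
        apply Measure.measure_univ_eq_zero.mp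
        simpa [ae_iff, Real.exp_ne_zero] using ae_iff.mp hae
      have : β / (β - a) = 0 := by rw [← ha, hμ0, integral_zero_measure]
      rcases div_eq_zero_iff.mp this with h | h
      · exact hβ0 h
      · exact hba h
    have hγα : γ - α ≠ 0 := sub_ne_zero.mpr (Ne.symm hαγ)
    rw [hcdef]
    field_simp
    ring
end

section
/- Let β > 0, ψ > 0, x ≥ 0, α > ψ, c ∈ (0,∞), and let a > β be a real number. Let W : [0,∞) → [0,∞) be nondecreasing with W(y)·e^{−ψy} → c as y → ∞ and ∫₀^∞ e^{−αy} W(y) dy = 1/(a−β). Define Z(u) := 1 + β ∫₀ᵘ W(s) ds and assume Z(y)/W(y) → β/ψ as y → ∞. Then lim_{K→∞} [ ( e^{−αK} + ∫₀ᴷ α e^{−αy} (W(y)/W(K)) dy )·Z(K−x) − β e^{−αx} ∫₀^{K−x} e^{−αy} W(y) dy ] = (β/(β−a))·( e^{−αx} − (α/ψ)·e^{−ψx} ). -/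
open MeasureTheory Filter

/-- Remark 2.1: as `K → ∞` the finite-capacity transient LST converges to the
time-dependent generalized Pollaczek–Khinchine formula. -/
theorem stmt_10 (β ψ x α c a : ℝ) (hβ : 0 < β) (hψ : 0 < ψ) (hx : 0 ≤ x) (hα : ψ < α)
    (hc : 0 < c) (ha : β < a)
    (W : ℝ → ℝ) (hWnn : ∀ y, 0 ≤ y → 0 ≤ W y) (hWmono : MonotoneOn W (Set.Ici 0))
    (hWasymp : Tendsto (fun y => W y * Real.exp (-ψ * y)) atTop (nhds c))
    (hWlap : ∫ y in Set.Ioi (0 : ℝ), Real.exp (-α * y) * W y = 1 / (a - β))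
    (Z : ℝ → ℝ) (hZ : ∀ u, Z u = 1 + β * ∫ s in (0 : ℝ)..u, W s)
    (hZW : Tendsto (fun y => Z y / W y) atTop (nhds (β / ψ))) :
    Tendsto
      (fun K =>
        (Real.exp (-α * K) + ∫ y in (0 : ℝ)..K, α * Real.exp (-α * y) * (W y / W K))
            * Z (K - x)
          - β * Real.exp (-α * x) * ∫ y in (0 : ℝ)..(K - x), Real.exp (-α * y) * W y)
      atTop (nhds ((β / (β - a)) * (Real.exp (-α * x) - (α / ψ) * Real.exp (-ψ * x)))) := by
  have hab : a - β ≠ 0 := by linarith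
  have hψ0 : ψ ≠ 0 := ne_of_gt hψ
  have hba : β - a ≠ 0 := by linarith
  -- integrability of the Laplace integrand
  have hInt : IntegrableOn (fun y => Real.exp (-α * y) * W y) (Set.Ioi 0) := by
    by_contra h
    rw [MeasureTheory.integral_undef h] at hWlap
    exact (one_div_ne_zero hab) hWlap.symm
  have hKx : Tendsto (fun K : ℝ => K - x) atTop atTop := by
    simpa [sub_eq_add_neg] using tendsto_atTop_add_const_right atTop (-x) tendsto_id
  have hD : Tendsto (fun K => ∫ y in (0:ℝ)..(K - x), Real.exp (-α*y) * W y) atTop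
      (nhds (1/(a-β))) := by
    rw [← hWlap]
    exact intervalIntegral_tendsto_integral_Ioi 0 hInt hKx
  have hD0 : Tendsto (fun K => ∫ y in (0:ℝ)..K, Real.exp (-α*y) * W y) atTop
      (nhds (1/(a-β))) := by
    rw [← hWlap]
    exact intervalIntegral_tendsto_integral_Ioi 0 hInt tendsto_id
  have hA : Tendsto (fun K => ∫ y in (0:ℝ)..K, α * Real.exp (-α*y) * W y) atTop
      (nhds (α * (1/(a-β)))) := by
    refine (hD0.const_mul α).congr (fun K => ?_)
    rw [← intervalIntegral.integral_const_mul]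
    congr 1; ext y; ring
  -- eventual positivity of W
  have hWpos : ∀ᶠ K in atTop, 0 < W K := by
    filter_upwards [hWasymp.eventually (eventually_gt_nhds hc)] with K hK
    nlinarith [Real.exp_pos (-ψ * K), hK]
  have hWpos' : ∀ᶠ K in atTop, 0 < W (K - x) := hKx.eventually hWpos
  -- ratio of the asymptotics
  have hgratio : Tendsto (fun K => (W (K - x) * Real.exp (-ψ * (K - x))) /
      (W K * Real.exp (-ψ * K))) atTop (nhds 1) := by
    have := (hWasymp.comp hKx).div hWasymp (ne_of_gt hc)
    rw [div_self (ne_of_gt hc)] at this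
    exact this
  have hZWcomp : Tendsto (fun K => Z (K - x) / W (K - x)) atTop (nhds (β/ψ)) :=
    hZW.comp hKx
  -- B : Z(K-x)/W(K) → (β/ψ) e^{-ψ x}
  have hB : Tendsto (fun K => Z (K - x) / W K) atTop
      (nhds ((β/ψ) * Real.exp (-ψ * x))) := by
    have hlim : Tendsto (fun K => (Z (K - x) / W (K - x)) *
        ((W (K - x) * Real.exp (-ψ * (K - x))) / (W K * Real.exp (-ψ * K)) *
          Real.exp (-ψ * x))) atTop (nhds ((β/ψ) * (1 * Real.exp (-ψ * x)))) :=
      hZWcomp.mul (hgratio.mul tendsto_const_nhds)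
    rw [one_mul] at hlim
    refine hlim.congr' ?_
    filter_upwards [hWpos, hWpos'] with K h1 h2
    have he : Real.exp (-ψ * (K - x)) * Real.exp (-ψ * x) = Real.exp (-ψ * K) := by
      rw [← Real.exp_add]; ring_nf
    rw [← he]
    field_simp
  -- C : e^{-αK} Z(K-x) → 0
  have hexp0 : Tendsto (fun K : ℝ => Real.exp ((ψ - α) * K)) atTop (nhds 0) := by
    have h1 : Tendsto (fun K : ℝ => (α - ψ) * K) atTop atTop :=
      Tendsto.const_mul_atTop (by linarith) tendsto_id
    have := Real.tendsto_exp_neg_atTop_nhds_zero.comp h1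
    refine this.congr (fun K => ?_)
    simp only [Function.comp]
    congr 1; ring
  have hC : Tendsto (fun K => Real.exp (-α * K) * Z (K - x)) atTop (nhds 0) := by
    have hlim : Tendsto (fun K => (Z (K - x) / W K) *
        ((W K * Real.exp (-ψ * K)) * Real.exp ((ψ - α) * K))) atTop
        (nhds (((β/ψ) * Real.exp (-ψ * x)) * (c * 0))) :=
      hB.mul (hWasymp.mul hexp0)
    rw [mul_zero, mul_zero] at hlim
    refine hlim.congr' ?_
    filter_upwards [hWpos] with K h1
    have he : Real.exp (-ψ * K) * Real.exp ((ψ - α) * K) = Real.exp (-α * K) := by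
      rw [← Real.exp_add]; ring_nf
    rw [← he]
    field_simp
  -- combine
  have hmain : Tendsto (fun K => Real.exp (-α * K) * Z (K - x) +
      (∫ y in (0:ℝ)..K, α * Real.exp (-α*y) * W y) * (Z (K - x) / W K) -
      β * Real.exp (-α * x) * ∫ y in (0:ℝ)..(K - x), Real.exp (-α*y) * W y) atTop
      (nhds (0 + α * (1/(a-β)) * ((β/ψ) * Real.exp (-ψ * x)) -
        β * Real.exp (-α * x) * (1/(a-β)))) :=
    (hC.add (hA.mul hB)).sub (hD.const_mul _)
  have hval : (0 + α * (1/(a-β)) * ((β/ψ) * Real.exp (-ψ * x)) -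
      β * Real.exp (-α * x) * (1/(a-β))) =
      (β / (β - a)) * (Real.exp (-α * x) - (α / ψ) * Real.exp (-ψ * x)) := by
    field_simp
    ring
  rw [← hval]
  refine hmain.congr (fun K => ?_)
  have hint : (∫ y in (0:ℝ)..K, α * Real.exp (-α * y) * (W y / W K)) =
      (∫ y in (0:ℝ)..K, α * Real.exp (-α*y) * W y) / W K := by
    rw [← intervalIntegral.integral_div]
    congr 1; ext y; ring
  rw [hint]
  ring
end

section
/- Let μ and ρ be finite Borel measures on [0,∞); let ψ > 0, γ > 0 and α ≥ 0 with α, γ, ψ pairwise distinct, and write Lμ(s) := ∫_{[0,∞)} e^{−sy} dμ(y) and Lρ(s) := ∫_{[0,∞)} e^{−sν} dρ(ν). Then ∫₀^∞ e^{−γu} ( ∫_{[0,u]} ∫₀^∞ ψ e^{−ψz} ∫_{(u−y+z,∞)} e^{−α(y−z+ν−u)} dρ(ν) dz dμ(y) ) du = Lμ(γ) · (ψ/(γ−ψ)) · ( (Lρ(α)−Lρ(ψ))/(ψ−α) − (Lρ(α)−Lρ(γ))/(γ−α) ). -/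
open MeasureTheory

private lemma exp_ii (b x : ℝ) (hb : b ≠ 0) :
    ∫ z in (0:ℝ)..x, Real.exp (b*z) = (Real.exp (b*x) - 1)/b := by
  rw [_root_.intervalIntegral.integral_comp_mul_left Real.exp hb]
  simp [integral_exp, mul_comm, div_eq_inv_mul]

private lemma exp_intOn {ρ : Measure ℝ} [IsFiniteMeasure ρ] {β s : ℝ} (hβ : 0 ≤ β) {S : Set ℝ}
    (hS : MeasurableSet S) (h : ∀ v ∈ S, s ≤ v) :
    IntegrableOn (fun v => Real.exp (-β*v)) S ρ := by
  apply Integrable.mono' (integrable_const (Real.exp (-β*s)))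
    (Real.continuous_exp.comp (continuous_const.mul continuous_id)).aestronglyMeasurable
  rw [ae_restrict_iff' hS]
  filter_upwards with v hv
  simp only [Function.comp, Pi.mul_apply, id_eq, Real.norm_eq_abs, abs_of_pos (Real.exp_pos _)]
  exact Real.exp_le_exp.2 (by nlinarith [h v hv])

private lemma int_prod_of_bound {ν₁ ν₂ : Measure ℝ} [SFinite ν₁] [SFinite ν₂]
    [IsFiniteMeasure ν₂] {f : ℝ × ℝ → ℝ} (hf : AEStronglyMeasurable f (ν₁.prod ν₂)) {g : ℝ → ℝ}
    (hg : Integrable g ν₁) (hb : ∀ p, |f p| ≤ g p.1) :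
    Integrable f (ν₁.prod ν₂) := by
  have hmap : Integrable g ((ν₁.prod ν₂).map Prod.fst) := by
    rw [Measure.map_fst_prod]
    exact hg.smul_measure (measure_ne_top _ _)
  have h1 : Integrable (fun p : ℝ × ℝ => g p.1) (ν₁.prod ν₂) :=
    (integrable_map_measure hmap.1 measurable_fst.aemeasurable).1 hmap
  exact h1.mono' hf (Filter.Eventually.of_forall fun p => by
    simpa [Real.norm_eq_abs] using hb p)

private lemma gfun_meas (ρ : Measure ℝ) [IsFiniteMeasure ρ] {ψ α : ℝ} (hψ : 0 ≤ ψ) (hα : 0 ≤ α) :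
    Measurable (fun s => ∫ v in Set.Ioi s, (Real.exp (-ψ*(v-s)) - Real.exp (-α*(v-s))) ∂ρ) := by
  have key : ∀ β : ℝ, 0 ≤ β →
      Measurable (fun s => Real.exp (β*s) * ∫ v in Set.Ioi s, Real.exp (-β*v) ∂ρ) := by
    intro β hβ
    have anti : Antitone (fun s => ∫ v in Set.Ioi s, Real.exp (-β*v) ∂ρ) := by
      intro s s' hss'
      exact setIntegral_mono_set (exp_intOn hβ measurableSet_Ioi (fun v hv => le_of_lt hv))
        (Filter.Eventually.of_forall fun v => (Real.exp_pos _).le)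
        (Filter.Eventually.of_forall (Set.Ioi_subset_Ioi hss'))
    exact (Real.measurable_exp.comp (measurable_const.mul measurable_id)).mul anti.measurable
  have heq : (fun s => ∫ v in Set.Ioi s, (Real.exp (-ψ*(v-s)) - Real.exp (-α*(v-s))) ∂ρ)
      = fun s => (Real.exp (ψ*s) * ∫ v in Set.Ioi s, Real.exp (-ψ*v) ∂ρ)
          - (Real.exp (α*s) * ∫ v in Set.Ioi s, Real.exp (-α*v) ∂ρ) := by
    funext s
    have e1 : ∀ (β v : ℝ), Real.exp (-β*(v-s)) = Real.exp (β*s) * Real.exp (-β*v) := by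
      intro β v; rw [← Real.exp_add]; congr 1; ring
    simp_rw [e1]
    rw [integral_sub ((exp_intOn hψ measurableSet_Ioi fun v hv => hv.le).const_mul _)
      ((exp_intOn hα measurableSet_Ioi fun v hv => hv.le).const_mul _),
      integral_const_mul, integral_const_mul]
  rw [heq]
  exact (key ψ hψ).sub (key α hα)

private lemma gfun_bound (ρ : Measure ℝ) [IsFiniteMeasure ρ] {ψ α : ℝ} (hψ : 0 ≤ ψ) (hα : 0 ≤ α)
    (s : ℝ) :
    |∫ v in Set.Ioi s, (Real.exp (-ψ*(v-s)) - Real.exp (-α*(v-s))) ∂ρ|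
      ≤ 2 * (ρ Set.univ).toReal := by
  rw [← Real.norm_eq_abs]
  calc ‖∫ v in Set.Ioi s, (Real.exp (-ψ*(v-s)) - Real.exp (-α*(v-s))) ∂ρ‖
      ≤ 2 * (ρ (Set.Ioi s)).toReal := by
        apply norm_setIntegral_le_of_norm_le_const (measure_lt_top _ _)
        intro v hv
        have hvs : (0:ℝ) ≤ v - s := by simp only [Set.mem_Ioi] at hv; linarith
        have h1 : Real.exp (-ψ*(v-s)) ≤ 1 := Real.exp_le_one_iff.2 (by nlinarith)
        have h2 : Real.exp (-α*(v-s)) ≤ 1 := Real.exp_le_one_iff.2 (by nlinarith)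
        have p1 := Real.exp_pos (-ψ*(v-s))
        have p2 := Real.exp_pos (-α*(v-s))
        rw [Real.norm_eq_abs, abs_le]
        constructor <;> nlinarith
    _ ≤ 2 * (ρ Set.univ).toReal := by
        have := ENNReal.toReal_mono (measure_ne_top ρ Set.univ)
          (measure_mono (Set.subset_univ (Set.Ioi s)))
        linarith

private lemma L1 (ρ : Measure ℝ) [IsFiniteMeasure ρ] {ψ α : ℝ} (hψ : 0 < ψ) (hα : 0 ≤ α)
    (hαψ : α ≠ ψ) (s : ℝ) :
    (∫ z in Set.Ioi (0:ℝ),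
        ψ * Real.exp (-ψ*z) * ∫ v in Set.Ioi (s+z), Real.exp (-α*(v-s-z)) ∂ρ)
      = (ψ/(α-ψ)) * ∫ v in Set.Ioi s, (Real.exp (-ψ*(v-s)) - Real.exp (-α*(v-s))) ∂ρ := by
  have hαψ' : α - ψ ≠ 0 := sub_ne_zero_of_ne hαψ
  set F : ℝ × ℝ → ℝ := fun p =>
    if s + p.1 < p.2 then ψ * Real.exp (-ψ*p.1) * Real.exp (-α*(p.2 - s - p.1)) else 0 with hF
  have hFmeas : Measurable F := by
    apply Measurable.ite (measurableSet_lt (measurable_const.add measurable_fst) measurable_snd)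
    · fun_prop
    · exact measurable_const
  have hint : Integrable F ((volume.restrict (Set.Ioi 0)).prod ρ) := by
    apply int_prod_of_bound hFmeas.aestronglyMeasurable (g := fun z => ψ * Real.exp (-ψ*z))
    · simpa [neg_mul] using (exp_neg_integrableOn_Ioi 0 hψ).const_mul ψ
    · intro p
      simp only [hF]
      split_ifs with h
      · have hpos : (0:ℝ) < p.2 - s - p.1 := by linarith
        have hle : Real.exp (-α*(p.2 - s - p.1)) ≤ 1 := Real.exp_le_one_iff.2 (by nlinarith)
        rw [abs_of_nonneg (by positivity)]
        exact mul_le_of_le_one_right (by positivity) hle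
      · rw [abs_zero]; positivity
  have step1 : ∀ z : ℝ,
      ψ * Real.exp (-ψ*z) * ∫ v in Set.Ioi (s+z), Real.exp (-α*(v-s-z)) ∂ρ
        = ∫ v, F (z, v) ∂ρ := by
    intro z
    rw [← integral_const_mul, ← integral_indicator measurableSet_Ioi]
    congr 1
  have step3 : ∀ v : ℝ, (∫ z in Set.Ioi (0:ℝ), F (z, v))
      = Set.indicator (Set.Ioi s)
          (fun v => (ψ/(α-ψ)) * (Real.exp (-ψ*(v-s)) - Real.exp (-α*(v-s)))) v := by
    intro v
    have h1 : ∀ z : ℝ, F (z, v) = Set.indicator (Set.Iio (v-s))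
        (fun z => ψ * Real.exp (-ψ*z) * Real.exp (-α*(v-s-z))) z := by
      intro z
      simp only [hF, Set.indicator_apply, Set.mem_Iio, lt_sub_iff_add_lt']
    simp_rw [h1]
    rw [integral_indicator measurableSet_Iio, Measure.restrict_restrict measurableSet_Iio]
    rcases le_or_gt v s with hvs | hvs
    · have hemp : Set.Iio (v - s) ∩ Set.Ioi 0 = (∅ : Set ℝ) := by
        apply Set.eq_empty_of_forall_notMem
        rintro z ⟨h1', h2'⟩
        simp only [Set.mem_Iio] at h1'
        simp only [Set.mem_Ioi] at h2'
        linarith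
      rw [hemp, Set.indicator_of_notMem (by simpa using hvs)]
      simp
    · rw [Set.indicator_of_mem (Set.mem_Ioi.2 hvs)]
      have hin : Set.Iio (v-s) ∩ Set.Ioi 0 = Set.Ioo 0 (v-s) := by
        ext z; simp only [Set.mem_inter_iff, Set.mem_Iio, Set.mem_Ioi, Set.mem_Ioo]; tauto
      rw [hin, ← integral_Ioc_eq_integral_Ioo,
        ← intervalIntegral.integral_of_le (by linarith : (0:ℝ) ≤ v - s)]
      have expand : ∀ z : ℝ, ψ * Real.exp (-ψ*z) * Real.exp (-α*(v-s-z))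
          = (ψ * Real.exp (-α*(v-s))) * Real.exp ((α-ψ)*z) := by
        intro z
        rw [mul_assoc, mul_assoc, ← Real.exp_add, ← Real.exp_add]
        congr 2; ring
      simp_rw [expand]
      rw [intervalIntegral.integral_const_mul, exp_ii _ _ hαψ']
      have key : Real.exp (-α*(v-s)) * Real.exp ((α-ψ)*(v-s)) = Real.exp (-ψ*(v-s)) := by
        rw [← Real.exp_add]; congr 1; ring
      linear_combination ψ/(α-ψ) * key
  calc (∫ z in Set.Ioi (0:ℝ),
        ψ * Real.exp (-ψ*z) * ∫ v in Set.Ioi (s+z), Real.exp (-α*(v-s-z)) ∂ρ)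
      = ∫ z in Set.Ioi (0:ℝ), ∫ v, F (z, v) ∂ρ := by simp_rw [step1]
    _ = ∫ v, (∫ z in Set.Ioi (0:ℝ), F (z, v)) ∂ρ := by
        exact integral_integral_swap (f := fun z v => F (z, v)) hint
    _ = ∫ v, Set.indicator (Set.Ioi s)
          (fun v => (ψ/(α-ψ)) * (Real.exp (-ψ*(v-s)) - Real.exp (-α*(v-s)))) v ∂ρ := by
        simp_rw [step3]
    _ = (ψ/(α-ψ)) * ∫ v in Set.Ioi s, (Real.exp (-ψ*(v-s)) - Real.exp (-α*(v-s))) ∂ρ := by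
        rw [integral_indicator measurableSet_Ioi, integral_const_mul]

private lemma L2 (ρ : Measure ℝ) [IsFiniteMeasure ρ] {ψ γ α : ℝ} (hψ : 0 < ψ) (hγ : 0 < γ)
    (hα : 0 ≤ α) (hγψ : γ ≠ ψ) (hαγ : α ≠ γ) :
    (∫ t in Set.Ioi (0:ℝ),
        Real.exp (-γ*t) * ∫ v in Set.Ioi t, (Real.exp (-ψ*(v-t)) - Real.exp (-α*(v-t))) ∂ρ)
      = ∫ v in Set.Ici (0:ℝ),
          ((Real.exp (-γ*v) - Real.exp (-ψ*v))/(ψ-γ)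
            - (Real.exp (-γ*v) - Real.exp (-α*v))/(α-γ)) ∂ρ := by
  have hψγ' : ψ - γ ≠ 0 := sub_ne_zero_of_ne (Ne.symm hγψ)
  have hαγ' : α - γ ≠ 0 := sub_ne_zero_of_ne hαγ
  set B : ℝ → ℝ := fun v => (Real.exp (-γ*v) - Real.exp (-ψ*v))/(ψ-γ)
      - (Real.exp (-γ*v) - Real.exp (-α*v))/(α-γ) with hB
  set F : ℝ × ℝ → ℝ := fun p =>
    if p.1 < p.2 then
      Real.exp (-γ*p.1) * (Real.exp (-ψ*(p.2-p.1)) - Real.exp (-α*(p.2-p.1))) else 0 with hF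
  have hFmeas : Measurable F := by
    apply Measurable.ite (measurableSet_lt measurable_fst measurable_snd)
    · fun_prop
    · exact measurable_const
  have hint : Integrable F ((volume.restrict (Set.Ioi 0)).prod ρ) := by
    apply int_prod_of_bound hFmeas.aestronglyMeasurable (g := fun t => 2 * Real.exp (-γ*t))
    · simpa [neg_mul] using (exp_neg_integrableOn_Ioi 0 hγ).const_mul 2
    · intro p
      simp only [hF]
      split_ifs with h
      · have hpos : (0:ℝ) ≤ p.2 - p.1 := by linarith
        have h1 : Real.exp (-ψ*(p.2-p.1)) ≤ 1 := Real.exp_le_one_iff.2 (by nlinarith)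
        have h2 : Real.exp (-α*(p.2-p.1)) ≤ 1 := Real.exp_le_one_iff.2 (by nlinarith)
        have p1 := Real.exp_pos (-ψ*(p.2-p.1))
        have p2 := Real.exp_pos (-α*(p.2-p.1))
        rw [abs_mul, abs_of_pos (Real.exp_pos (-γ*p.1))]
        have habs : |Real.exp (-ψ*(p.2-p.1)) - Real.exp (-α*(p.2-p.1))| ≤ 2 := by
          rw [abs_le]; constructor <;> nlinarith
        calc Real.exp (-γ*p.1) * |Real.exp (-ψ*(p.2-p.1)) - Real.exp (-α*(p.2-p.1))|
            ≤ Real.exp (-γ*p.1) * 2 :=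
              mul_le_mul_of_nonneg_left habs (Real.exp_pos _).le
          _ = 2 * Real.exp (-γ*p.1) := mul_comm _ _
      · rw [abs_zero]; positivity
  have step1 : ∀ t : ℝ,
      Real.exp (-γ*t) * ∫ v in Set.Ioi t, (Real.exp (-ψ*(v-t)) - Real.exp (-α*(v-t))) ∂ρ
        = ∫ v, F (t, v) ∂ρ := by
    intro t
    rw [← integral_const_mul, ← integral_indicator measurableSet_Ioi]
    congr 1
  have step3 : ∀ v : ℝ, (∫ t in Set.Ioi (0:ℝ), F (t, v)) = Set.indicator (Set.Ici 0) B v := by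
    intro v
    have h1 : ∀ t : ℝ, F (t, v) = Set.indicator (Set.Iio v)
        (fun t => Real.exp (-γ*t) * (Real.exp (-ψ*(v-t)) - Real.exp (-α*(v-t)))) t := by
      intro t
      simp only [hF, Set.indicator_apply, Set.mem_Iio]
    simp_rw [h1]
    rw [integral_indicator measurableSet_Iio, Measure.restrict_restrict measurableSet_Iio]
    have hin : Set.Iio v ∩ Set.Ioi 0 = Set.Ioo 0 v := by
      ext t; simp only [Set.mem_inter_iff, Set.mem_Iio, Set.mem_Ioi, Set.mem_Ioo]; tauto
    rw [hin]
    rcases lt_trichotomy v 0 with hv | hv | hv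
    · rw [Set.Ioo_eq_empty (by intro h; exact absurd (lt_trans h hv) (lt_irrefl 0))]
      rw [Set.indicator_of_notMem (by simpa using not_le.2 hv)]
      simp
    · subst hv
      rw [Set.Ioo_eq_empty (lt_irrefl 0), Set.indicator_of_mem (Set.mem_Ici.2 le_rfl)]
      simp only [hB]
      norm_num
    · rw [Set.indicator_of_mem (Set.mem_Ici.2 hv.le), ← integral_Ioc_eq_integral_Ioo,
        ← intervalIntegral.integral_of_le hv.le]
      have expand : ∀ t : ℝ,
          Real.exp (-γ*t) * (Real.exp (-ψ*(v-t)) - Real.exp (-α*(v-t)))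
            = Real.exp (-ψ*v) * Real.exp ((ψ-γ)*t) - Real.exp (-α*v) * Real.exp ((α-γ)*t) := by
        intro t
        have e1 : Real.exp (-γ*t) * Real.exp (-ψ*(v-t))
            = Real.exp (-ψ*v) * Real.exp ((ψ-γ)*t) := by
          rw [← Real.exp_add, ← Real.exp_add]; congr 1; ring
        have e2 : Real.exp (-γ*t) * Real.exp (-α*(v-t))
            = Real.exp (-α*v) * Real.exp ((α-γ)*t) := by
          rw [← Real.exp_add, ← Real.exp_add]; congr 1; ring
        linear_combination e1 - e2
      simp_rw [expand]
      rw [intervalIntegral.integral_sub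
          ((by fun_prop : Continuous fun t : ℝ =>
            Real.exp (-ψ*v) * Real.exp ((ψ-γ)*t)).intervalIntegrable _ _)
          ((by fun_prop : Continuous fun t : ℝ =>
            Real.exp (-α*v) * Real.exp ((α-γ)*t)).intervalIntegrable _ _),
        intervalIntegral.integral_const_mul, intervalIntegral.integral_const_mul,
        exp_ii _ _ hψγ', exp_ii _ _ hαγ']
      have key1 : Real.exp (-ψ*v) * Real.exp ((ψ-γ)*v) = Real.exp (-γ*v) := by
        rw [← Real.exp_add]; congr 1; ring
      have key2 : Real.exp (-α*v) * Real.exp ((α-γ)*v) = Real.exp (-γ*v) := by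
        rw [← Real.exp_add]; congr 1; ring
      simp only [hB]
      linear_combination key1/(ψ-γ) - key2/(α-γ)
  calc (∫ t in Set.Ioi (0:ℝ),
        Real.exp (-γ*t) * ∫ v in Set.Ioi t, (Real.exp (-ψ*(v-t)) - Real.exp (-α*(v-t))) ∂ρ)
      = ∫ t in Set.Ioi (0:ℝ), ∫ v, F (t, v) ∂ρ := by simp_rw [step1]
    _ = ∫ v, (∫ t in Set.Ioi (0:ℝ), F (t, v)) ∂ρ := by
        exact integral_integral_swap (f := fun t v => F (t, v)) hint
    _ = ∫ v, Set.indicator (Set.Ici 0) B v ∂ρ := by simp_rw [step3]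
    _ = ∫ v in Set.Ici (0:ℝ), B v ∂ρ := integral_indicator measurableSet_Ici

private lemma L3 (μ : Measure ℝ) [IsFiniteMeasure μ] {γ : ℝ} (hγ : 0 < γ)
    (hμ : μ (Set.Iio 0) = 0) (G : ℝ → ℝ) (hGm : Measurable G) (C : ℝ) (hC : ∀ s, |G s| ≤ C) :
    (∫ u in Set.Ioi (0:ℝ), Real.exp (-γ*u) * ∫ y in Set.Icc 0 u, G (u - y) ∂μ)
      = (∫ y in Set.Ici (0:ℝ), Real.exp (-γ*y) ∂μ)
          * ∫ t in Set.Ioi (0:ℝ), Real.exp (-γ*t) * G t := by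
  set F : ℝ × ℝ → ℝ := fun p =>
    if 0 ≤ p.2 ∧ p.2 ≤ p.1 then Real.exp (-γ*p.1) * G (p.1 - p.2) else 0 with hF
  have hFmeas : Measurable F := by
    apply Measurable.ite
      ((measurableSet_le measurable_const measurable_snd).inter
        (measurableSet_le measurable_snd measurable_fst))
    · exact (Real.measurable_exp.comp (measurable_const.mul measurable_fst)).mul
        (hGm.comp (measurable_fst.sub measurable_snd))
    · exact measurable_const
  have hint : Integrable F ((volume.restrict (Set.Ioi 0)).prod μ) := by
    apply int_prod_of_bound hFmeas.aestronglyMeasurable (g := fun u => C * Real.exp (-γ*u))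
    · simpa [neg_mul] using (exp_neg_integrableOn_Ioi 0 hγ).const_mul C
    · intro p
      simp only [hF]
      split_ifs with h
      · rw [abs_mul, abs_of_pos (Real.exp_pos _)]
        calc Real.exp (-γ*p.1) * |G (p.1-p.2)| ≤ Real.exp (-γ*p.1) * C :=
              mul_le_mul_of_nonneg_left (hC _) (Real.exp_pos _).le
          _ = C * Real.exp (-γ*p.1) := mul_comm _ _
      · rw [abs_zero]
        exact mul_nonneg (le_trans (abs_nonneg _) (hC 0)) (Real.exp_pos _).le
  have step1 : ∀ u : ℝ, Real.exp (-γ*u) * ∫ y in Set.Icc 0 u, G (u - y) ∂μ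
      = ∫ y, F (u, y) ∂μ := by
    intro u
    rw [← integral_const_mul, ← integral_indicator measurableSet_Icc]
    congr 1
    funext y
    simp only [Set.indicator_apply, Set.mem_Icc, hF]
  have step2 : ∀ y : ℝ, 0 ≤ y → (∫ u in Set.Ioi (0:ℝ), F (u, y))
      = Real.exp (-γ*y) * ∫ t in Set.Ioi (0:ℝ), Real.exp (-γ*t) * G t := by
    intro y hy
    have h1 : ∀ u : ℝ, F (u, y)
        = Set.indicator (Set.Ici y) (fun u => Real.exp (-γ*u) * G (u - y)) u := by
      intro u
      simp only [hF, Set.indicator_apply, Set.mem_Ici]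
      by_cases h : y ≤ u
      · rw [if_pos ⟨hy, h⟩, if_pos h]
      · rw [if_neg (fun hc => h hc.2), if_neg h]
    simp_rw [h1]
    rw [integral_indicator measurableSet_Ici, Measure.restrict_restrict measurableSet_Ici]
    have hset : (Set.Ici y ∩ Set.Ioi 0 : Set ℝ) =ᵐ[volume] (Set.Ioi y : Set ℝ) := by
      have hy' : ∀ᵐ u : ℝ, u ≠ y := by
        rw [ae_iff]
        simp only [ne_eq, not_not]
        have : {a : ℝ | a = y} = {y} := by ext a; simp
        rw [this]
        exact measure_singleton y
      rw [Filter.eventuallyEq_set]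
      filter_upwards [hy'] with u hu
      simp only [Set.mem_inter_iff, Set.mem_Ici, Set.mem_Ioi]
      constructor
      · rintro ⟨h1', h2'⟩
        rcases lt_or_eq_of_le h1' with h | h
        · exact h
        · exact absurd h.symm hu
      · intro h
        exact ⟨h.le, by linarith⟩
    rw [setIntegral_congr_set hset]
    calc (∫ u in Set.Ioi y, Real.exp (-γ*u) * G (u - y))
        = ∫ u, Set.indicator (Set.Ioi y) (fun u => Real.exp (-γ*u) * G (u - y)) u :=
          (integral_indicator measurableSet_Ioi).symm
      _ = ∫ t, Set.indicator (Set.Ioi y) (fun u => Real.exp (-γ*u) * G (u - y)) (t + y) :=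
          (integral_add_right_eq_self _ y).symm
      _ = ∫ t, Set.indicator (Set.Ioi 0) (fun t => Real.exp (-γ*(t+y)) * G t) t := by
          congr 1
          funext t
          by_cases ht : 0 < t
          · rw [Set.indicator_of_mem (Set.mem_Ioi.2 (by linarith : y < t + y)),
              Set.indicator_of_mem (Set.mem_Ioi.2 ht), add_sub_cancel_right]
          · rw [Set.indicator_of_notMem (by simp only [Set.mem_Ioi]; intro hc; exact ht (by linarith)),
              Set.indicator_of_notMem (by simpa using ht)]
      _ = ∫ t in Set.Ioi (0:ℝ), Real.exp (-γ*(t+y)) * G t := integral_indicator measurableSet_Ioi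
      _ = Real.exp (-γ*y) * ∫ t in Set.Ioi (0:ℝ), Real.exp (-γ*t) * G t := by
          rw [← integral_const_mul]
          congr 1
          funext t
          have he : Real.exp (-γ*(t+y)) = Real.exp (-γ*y) * Real.exp (-γ*t) := by
            rw [← Real.exp_add]; congr 1; ring
          rw [he]; ring
  have hres : μ.restrict (Set.Ici 0) = μ := by
    apply Measure.restrict_eq_self_of_ae_mem
    rw [ae_iff]
    have : {a : ℝ | ¬ a ∈ Set.Ici 0} = Set.Iio 0 := by
      ext a; simp [Set.mem_Ici, Set.mem_Iio, not_le]
    rw [this]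
    exact hμ
  calc (∫ u in Set.Ioi (0:ℝ), Real.exp (-γ*u) * ∫ y in Set.Icc 0 u, G (u - y) ∂μ)
      = ∫ u in Set.Ioi (0:ℝ), ∫ y, F (u, y) ∂μ := by simp_rw [step1]
    _ = ∫ y, (∫ u in Set.Ioi (0:ℝ), F (u, y)) ∂μ := by
        exact integral_integral_swap (f := fun u y => F (u, y)) hint
    _ = ∫ y in Set.Ici (0:ℝ), (∫ u in Set.Ioi (0:ℝ), F (u, y)) ∂μ := by rw [hres]
    _ = ∫ y in Set.Ici (0:ℝ),
          (Real.exp (-γ*y) * ∫ t in Set.Ioi (0:ℝ), Real.exp (-γ*t) * G t) ∂μ :=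
        setIntegral_congr_fun measurableSet_Ici (fun y hy => step2 y hy)
    _ = (∫ y in Set.Ici (0:ℝ), Real.exp (-γ*y) ∂μ)
          * ∫ t in Set.Ioi (0:ℝ), Real.exp (-γ*t) * G t := integral_mul_const _ _

/-- The Fubini/change-of-variables identity behind the second term of (4.3)
(non-subordinator states). -/
theorem stmt_13 (ψ γ α : ℝ) (hψ : 0 < ψ) (hγ : 0 < γ) (hα : 0 ≤ α)
    (hαγ : α ≠ γ) (hαψ : α ≠ ψ) (hγψ : γ ≠ ψ)
    (μ ρ : Measure ℝ) [IsFiniteMeasure μ] [IsFiniteMeasure ρ]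
    (hμ : μ (Set.Iio 0) = 0) (hρ : ρ (Set.Iio 0) = 0) :
    ∫ u in Set.Ioi (0 : ℝ),
        Real.exp (-γ * u) *
          ∫ y in Set.Icc 0 u,
            (∫ z in Set.Ioi (0 : ℝ),
              ψ * Real.exp (-ψ * z) *
                ∫ v in Set.Ioi (u - y + z), Real.exp (-α * (y - z + v - u)) ∂ρ) ∂μ
      = (∫ y in Set.Ici (0 : ℝ), Real.exp (-γ * y) ∂μ) * (ψ / (γ - ψ)) *
          (((∫ v in Set.Ici (0 : ℝ), Real.exp (-α * v) ∂ρ)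
              - ∫ v in Set.Ici (0 : ℝ), Real.exp (-ψ * v) ∂ρ) / (ψ - α)
            - ((∫ v in Set.Ici (0 : ℝ), Real.exp (-α * v) ∂ρ)
              - ∫ v in Set.Ici (0 : ℝ), Real.exp (-γ * v) ∂ρ) / (γ - α)) := by
  have hαψ' : α - ψ ≠ 0 := sub_ne_zero_of_ne hαψ
  have hexp : ∀ u y z v : ℝ, -α * (y - z + v - u) = -α * (v - (u - y) - z) := by
    intros; ring
  set Gc : ℝ → ℝ := fun s =>
    (ψ/(α-ψ)) * ∫ v in Set.Ioi s, (Real.exp (-ψ*(v-s)) - Real.exp (-α*(v-s))) ∂ρ with hGc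
  have hL1 : ∀ u y : ℝ,
      (∫ z in Set.Ioi (0:ℝ), ψ * Real.exp (-ψ * z) *
          ∫ v in Set.Ioi (u - y + z), Real.exp (-α * (v - (u - y) - z)) ∂ρ) = Gc (u - y) :=
    fun u y => L1 ρ hψ hα hαψ (u - y)
  simp_rw [hexp, hL1]
  have hGm : Measurable Gc := by
    rw [hGc]
    exact (gfun_meas ρ hψ.le hα).const_mul _
  have hGb : ∀ s, |Gc s| ≤ |ψ/(α-ψ)| * (2 * (ρ Set.univ).toReal) := by
    intro s
    rw [hGc]
    simp only
    rw [abs_mul]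
    exact mul_le_mul_of_nonneg_left (gfun_bound ρ hψ.le hα s) (abs_nonneg _)
  rw [L3 μ hγ hμ Gc hGm _ hGb]
  have hpull : ∀ t : ℝ, Real.exp (-γ*t) * Gc t
      = (ψ/(α-ψ)) * (Real.exp (-γ*t)
          * ∫ v in Set.Ioi t, (Real.exp (-ψ*(v-t)) - Real.exp (-α*(v-t))) ∂ρ) := by
    intro t; rw [hGc]; ring
  simp_rw [hpull]
  rw [integral_const_mul, L2 ρ hψ hγ hα hγψ hαγ]
  have iγ : IntegrableOn (fun v => Real.exp (-γ*v)) (Set.Ici 0) ρ :=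
    exp_intOn hγ.le measurableSet_Ici (fun v hv => hv)
  have iψ : IntegrableOn (fun v => Real.exp (-ψ*v)) (Set.Ici 0) ρ :=
    exp_intOn hψ.le measurableSet_Ici (fun v hv => hv)
  have iα : IntegrableOn (fun v => Real.exp (-α*v)) (Set.Ici 0) ρ :=
    exp_intOn hα measurableSet_Ici (fun v hv => hv)
  have hsplit : (∫ v in Set.Ici (0:ℝ),
        ((Real.exp (-γ*v) - Real.exp (-ψ*v))/(ψ-γ)
          - (Real.exp (-γ*v) - Real.exp (-α*v))/(α-γ)) ∂ρ)
      = ((∫ v in Set.Ici (0:ℝ), Real.exp (-γ*v) ∂ρ)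
            - ∫ v in Set.Ici (0:ℝ), Real.exp (-ψ*v) ∂ρ)/(ψ-γ)
        - ((∫ v in Set.Ici (0:ℝ), Real.exp (-γ*v) ∂ρ)
            - ∫ v in Set.Ici (0:ℝ), Real.exp (-α*v) ∂ρ)/(α-γ) := by
    have e : ∀ v : ℝ,
        (Real.exp (-γ*v) - Real.exp (-ψ*v))/(ψ-γ)
          - (Real.exp (-γ*v) - Real.exp (-α*v))/(α-γ)
        = (Real.exp (-γ*v) - Real.exp (-ψ*v)) * (1/(ψ-γ))
          - (Real.exp (-γ*v) - Real.exp (-α*v)) * (1/(α-γ)) := by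
      intro v; ring
    simp_rw [e]
    have A : Integrable (fun v => (Real.exp (-γ*v) - Real.exp (-ψ*v)) * (1/(ψ-γ)))
        (ρ.restrict (Set.Ici 0)) := (iγ.sub iψ).mul_const _
    have B : Integrable (fun v => (Real.exp (-γ*v) - Real.exp (-α*v)) * (1/(α-γ)))
        (ρ.restrict (Set.Ici 0)) := (iγ.sub iα).mul_const _
    rw [integral_sub A B, integral_mul_const, integral_mul_const,
      integral_sub iγ iψ, integral_sub iγ iα]
    ring
  rw [hsplit]
  have h1 : ψ - γ ≠ 0 := sub_ne_zero_of_ne (Ne.symm hγψ)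
  have h2 : α - γ ≠ 0 := sub_ne_zero_of_ne hαγ
  have h3 : γ - ψ ≠ 0 := sub_ne_zero_of_ne hγψ
  have h4 : ψ - α ≠ 0 := sub_ne_zero_of_ne (Ne.symm hαψ)
  have h5 : γ - α ≠ 0 := sub_ne_zero_of_ne (Ne.symm hαγ)
  field_simp
  ring
end
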